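/- arXiv:1510.04473 — 3 statements merged into one kernel-verified Lean document; each statement's English description precedes it below -/
import Mathlib

section
/- If M is a positive semi-definite matrix and x̂ is a solution of LCP(M,b), then the full solution set of LCP(M,b) equals the convex polyhedron S = { x ∈ ℝ^p : x ≥ 0, Mx + b ≥ 0, bᵀ(x − x̂) = 0, (M + Mᵀ)(x − x̂) = 0 }. In particular the solution set of LCP(M,b) is convex. -/
open Matrix

lemma dotnn {p : ℕ} {u v : Fin p → ℝ} (hu : 0 ≤ u) (hv : 0 ≤ v) : 0 ≤ u ⬝ᵥ v :=
  Finset.sum_nonneg fun i _ => mul_nonneg (hu i) (hv i)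

lemma symdot {p : ℕ} (M : Matrix (Fin p) (Fin p) ℝ) (u v : Fin p → ℝ) :
    u ⬝ᵥ Mᵀ.mulVec v = v ⬝ᵥ M.mulVec u := by
  rw [mulVec_transpose, dotProduct_comm, ← dotProduct_mulVec]

lemma dotsq_zero {p : ℕ} {w : Fin p → ℝ} (h : w ⬝ᵥ w = 0) : w = 0 := by
  funext i
  have := (Finset.sum_eq_zero_iff_of_nonneg (fun j _ => mul_self_nonneg (w j))).mp h i (Finset.mem_univ i)
  have : w i = 0 := by nlinarith [this]
  simpa using this

lemma ker_of_quad {p : ℕ} (A : Matrix (Fin p) (Fin p) ℝ) (hsym : Aᵀ = A)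
    (hpsd : ∀ z, 0 ≤ z ⬝ᵥ A.mulVec z) (z : Fin p → ℝ)
    (hz : z ⬝ᵥ A.mulVec z = 0) : A.mulVec z = 0 := by
  set w := A.mulVec z with hw
  set c := w ⬝ᵥ w with hc
  set a := w ⬝ᵥ A.mulVec w with ha
  have ha0 : 0 ≤ a := hpsd w
  have hzw : z ⬝ᵥ A.mulVec w = c := by
    rw [← hsym, symdot]
  have key : ∀ t : ℝ, 0 ≤ 2 * t * c + t ^ 2 * a := by
    intro t
    have := hpsd (z + t • w)
    rw [mulVec_add, mulVec_smul, dotProduct_add, add_dotProduct, add_dotProduct,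
      dotProduct_smul, smul_dotProduct, smul_dotProduct, dotProduct_smul] at this
    simp only [smul_eq_mul] at this
    rw [hz, hzw] at this
    nlinarith [this]
  have hc2 := key (-c / (a + 1))
  have h1 : (0:ℝ) < a + 1 := by linarith
  have heq : 2 * (-c / (a + 1)) * c + (-c / (a + 1)) ^ 2 * a
      = (-(c ^ 2) * (a + 2)) / ((a + 1) ^ 2) := by
    field_simp
    ring
  rw [heq] at hc2
  have hX : 0 ≤ -(c ^ 2) * (a + 2) := by
    rcases div_nonneg_iff.mp hc2 with ⟨h, _⟩ | ⟨_, h⟩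
    · exact h
    · nlinarith [h]
  have hc0 : c = 0 := by nlinarith [sq_nonneg c]
  exact dotsq_zero hc0

/-- For PSD `M` and a solution `x̂` of `LCP(M,b)`, the solution set equals
the polyhedron `S = {x ≥ 0 : Mx+b ≥ 0, bᵀ(x−x̂)=0, (M+Mᵀ)(x−x̂)=0}`; in particular the
solution set is convex. -/
theorem lcp_solution_set_eq_polyhedron {p : ℕ}
    (M : Matrix (Fin p) (Fin p) ℝ) (b : Fin p → ℝ)
    (hpsd : ∀ x : Fin p → ℝ, 0 ≤ x ⬝ᵥ M.mulVec x)
    (xhat : Fin p → ℝ)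
    (hhat : 0 ≤ xhat ∧ 0 ≤ M.mulVec xhat + b ∧ xhat ⬝ᵥ (M.mulVec xhat + b) = 0) :
    ({x : Fin p → ℝ | 0 ≤ x ∧ 0 ≤ M.mulVec x + b ∧ x ⬝ᵥ (M.mulVec x + b) = 0}
      = {x : Fin p → ℝ | 0 ≤ x ∧ 0 ≤ M.mulVec x + b ∧ b ⬝ᵥ (x - xhat) = 0 ∧
          (M + Mᵀ).mulVec (x - xhat) = 0}) ∧
    Convex ℝ {x : Fin p → ℝ | 0 ≤ x ∧ 0 ≤ M.mulVec x + b ∧ x ⬝ᵥ (M.mulVec x + b) = 0} := by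
  obtain ⟨hh0, hhF, hhq⟩ := hhat
  have hhq' : xhat ⬝ᵥ M.mulVec xhat + xhat ⬝ᵥ b = 0 := by
    rw [← dotProduct_add]; exact hhq
  have hAsym : (M + Mᵀ)ᵀ = M + Mᵀ := by
    rw [transpose_add, transpose_transpose, add_comm]
  have hsym2 : ∀ u : Fin p → ℝ, u ⬝ᵥ Mᵀ.mulVec u = u ⬝ᵥ M.mulVec u := fun u => symdot M u u
  have hApsd : ∀ z, 0 ≤ z ⬝ᵥ (M + Mᵀ).mulVec z := by
    intro z
    rw [add_mulVec, dotProduct_add, hsym2]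
    have := hpsd z
    linarith
  have hAdot : ∀ u z : Fin p → ℝ,
      u ⬝ᵥ (M + Mᵀ).mulVec z = u ⬝ᵥ M.mulVec z + z ⬝ᵥ M.mulVec u := by
    intro u z
    rw [add_mulVec, dotProduct_add, symdot]
  have hset : ({x : Fin p → ℝ | 0 ≤ x ∧ 0 ≤ M.mulVec x + b ∧ x ⬝ᵥ (M.mulVec x + b) = 0}
      = {x : Fin p → ℝ | 0 ≤ x ∧ 0 ≤ M.mulVec x + b ∧ b ⬝ᵥ (x - xhat) = 0 ∧
          (M + Mᵀ).mulVec (x - xhat) = 0}) := by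
    ext x
    simp only [Set.mem_setOf_eq]
    constructor
    · rintro ⟨hx0, hxF, hxq⟩
      have hxq' : x ⬝ᵥ M.mulVec x + x ⬝ᵥ b = 0 := by
        rw [← dotProduct_add]; exact hxq
      have hs : 0 ≤ x ⬝ᵥ (M.mulVec xhat + b) := dotnn hx0 hhF
      have ht : 0 ≤ xhat ⬝ᵥ (M.mulVec x + b) := dotnn hh0 hxF
      rw [dotProduct_add] at hs ht
      have hz : 0 ≤ (x - xhat) ⬝ᵥ M.mulVec (x - xhat) := hpsd _
      rw [mulVec_sub, dotProduct_sub, sub_dotProduct, sub_dotProduct] at hz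
      -- all three slack quantities vanish
      have hs0 : x ⬝ᵥ M.mulVec xhat + x ⬝ᵥ b = 0 := by linarith
      have ht0 : xhat ⬝ᵥ M.mulVec x + xhat ⬝ᵥ b = 0 := by linarith
      have hz0 : x ⬝ᵥ M.mulVec x - x ⬝ᵥ M.mulVec xhat
          - (xhat ⬝ᵥ M.mulVec x - xhat ⬝ᵥ M.mulVec xhat) = 0 := by linarith
      have hquadz : (x - xhat) ⬝ᵥ (M + Mᵀ).mulVec (x - xhat) = 0 := by
        rw [hAdot, mulVec_sub, dotProduct_sub, sub_dotProduct, sub_dotProduct]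
        linarith
      have hAz := ker_of_quad (M + Mᵀ) hAsym hApsd (x - xhat) hquadz
      refine ⟨hx0, hxF, ?_, hAz⟩
      have hxAz : x ⬝ᵥ (M + Mᵀ).mulVec (x - xhat) = 0 := by
        rw [hAz, dotProduct_zero]
      rw [hAdot, mulVec_sub, dotProduct_sub, sub_dotProduct] at hxAz
      rw [dotProduct_sub]
      rw [dotProduct_comm b x, dotProduct_comm b xhat]
      linarith
    · rintro ⟨hx0, hxF, hb, hA⟩
      refine ⟨hx0, hxF, ?_⟩
      have h1 : (x - xhat) ⬝ᵥ (M + Mᵀ).mulVec (x - xhat) = 0 := by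
        rw [hA, dotProduct_zero]
      rw [hAdot, mulVec_sub, dotProduct_sub, sub_dotProduct, sub_dotProduct] at h1
      have h2 : xhat ⬝ᵥ (M + Mᵀ).mulVec (x - xhat) = 0 := by
        rw [hA, dotProduct_zero]
      rw [hAdot, mulVec_sub, dotProduct_sub, sub_dotProduct] at h2
      rw [dotProduct_sub, dotProduct_comm b x, dotProduct_comm b xhat] at hb
      rw [dotProduct_add]
      linarith
  refine ⟨hset, ?_⟩
  rw [hset]
  intro x hx y hy a c ha hc hac
  simp only [Set.mem_setOf_eq] at hx hy ⊢
  have key : a • x + c • y - xhat = a • (x - xhat) + c • (y - xhat) := by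
    funext i
    simp only [Pi.add_apply, Pi.sub_apply, Pi.smul_apply, smul_eq_mul]
    linear_combination (xhat i) * hac
  refine ⟨?_, ?_, ?_, ?_⟩
  · rw [Pi.le_def]
    intro i
    simp only [Pi.add_apply, Pi.smul_apply, smul_eq_mul, Pi.zero_apply]
    have h1 := hx.1 i
    have h2 := hy.1 i
    simp only [Pi.zero_apply] at h1 h2
    nlinarith
  · have heq : M.mulVec (a • x + c • y) + b
        = a • (M.mulVec x + b) + c • (M.mulVec y + b) := by
      rw [mulVec_add, mulVec_smul, mulVec_smul]
      funext i
      simp only [Pi.add_apply, Pi.smul_apply, smul_eq_mul]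
      linear_combination (-(b i)) * hac
    rw [heq]
    exact add_nonneg (smul_nonneg ha hx.2.1) (smul_nonneg hc hy.2.1)
  · rw [key, dotProduct_add, dotProduct_smul, dotProduct_smul, hx.2.2.1, hy.2.2.1]
    simp
  · rw [key, mulVec_add, mulVec_smul, mulVec_smul, hx.2.2.2, hy.2.2.2]
    simp
end

section
/- Let M be positive semi-definite with M + Mᵀ diagonal. If the diagonal entry M_{ii} > 0, then the i-th component of the solution of LCP(M,b) is unique: any two solutions x, y of LCP(M,b) satisfy x_i = y_i. -/
open Matrix

/-- If `M` is PSD with `M + Mᵀ` diagonal and `M i i > 0`, then the `i`-th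
component of the solution of `LCP(M,b)` is unique. -/
theorem lcp_component_unique {p : ℕ}
    (M : Matrix (Fin p) (Fin p) ℝ) (b : Fin p → ℝ)
    (hpsd : ∀ x : Fin p → ℝ, 0 ≤ x ⬝ᵥ M.mulVec x)
    (hdiag : ∀ i j : Fin p, i ≠ j → (M + Mᵀ) i j = 0)
    (i : Fin p) (hi : 0 < M i i)
    (x y : Fin p → ℝ)
    (hx : 0 ≤ x ∧ 0 ≤ M.mulVec x + b ∧ x ⬝ᵥ (M.mulVec x + b) = 0)
    (hy : 0 ≤ y ∧ 0 ≤ M.mulVec y + b ∧ y ⬝ᵥ (M.mulVec y + b) = 0) :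
    x i = y i := by
  obtain ⟨hx0, hxw, hxc⟩ := hx
  obtain ⟨hy0, hyw, hyc⟩ := hy
  set z : Fin p → ℝ := x - y with hz
  -- cross terms nonneg
  have hC : 0 ≤ x ⬝ᵥ (M.mulVec y + b) :=
    Finset.sum_nonneg fun j _ => mul_nonneg (hx0 j) (hyw j)
  have hD : 0 ≤ y ⬝ᵥ (M.mulVec x + b) :=
    Finset.sum_nonneg fun j _ => mul_nonneg (hy0 j) (hxw j)
  -- z ⬝ M z = 0
  have hexp : z ⬝ᵥ M.mulVec z =
      (x ⬝ᵥ (M.mulVec x + b) + y ⬝ᵥ (M.mulVec y + b))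
        - (x ⬝ᵥ (M.mulVec y + b) + y ⬝ᵥ (M.mulVec x + b)) := by
    simp only [hz, Matrix.mulVec_sub, dotProduct_add, sub_dotProduct,
      dotProduct_sub]
    ring
  have hle : z ⬝ᵥ M.mulVec z ≤ 0 := by
    rw [hexp, hxc, hyc]; linarith
  have hzero : z ⬝ᵥ M.mulVec z = 0 := le_antisymm hle (hpsd z)
  -- diagonal entries of M are nonneg
  have hMdiag : ∀ j : Fin p, 0 ≤ M j j := by
    intro j
    have := hpsd (Pi.single j 1)
    simpa [dotProduct, Matrix.mulVec, Pi.single_apply, Finset.mul_sum,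
      mul_ite, ite_mul, Finset.sum_ite_eq, Finset.sum_ite_eq'] using this
  -- z ⬝ (M + Mᵀ) z = 2 z ⬝ M z
  have htr : z ⬝ᵥ (Mᵀ).mulVec z = z ⬝ᵥ M.mulVec z := by
    rw [Matrix.mulVec_transpose, dotProduct_comm, ← Matrix.dotProduct_mulVec]
  have hsum : ∑ j, (M + Mᵀ) j j * (z j)^2 = 0 := by
    have h1 : z ⬝ᵥ (M + Mᵀ).mulVec z = 0 := by
      rw [Matrix.add_mulVec, dotProduct_add, htr, hzero]; ring
    have h2 : z ⬝ᵥ (M + Mᵀ).mulVec z = ∑ j, (M + Mᵀ) j j * (z j)^2 := by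
      unfold dotProduct Matrix.mulVec dotProduct
      apply Finset.sum_congr rfl
      intro j _
      have : ∑ k, (M + Mᵀ) j k * z k = (M + Mᵀ) j j * z j := by
        apply Finset.sum_eq_single
        · intro k _ hk
          rw [hdiag j k (fun h => hk h.symm)]; ring
        · intro h; exact absurd (Finset.mem_univ j) h
      rw [this]; ring
    rw [← h2, h1]
  have hterm : ∀ j ∈ Finset.univ, 0 ≤ (M + Mᵀ) j j * (z j)^2 := by
    intro j _
    apply mul_nonneg _ (sq_nonneg _)
    simp only [Matrix.add_apply, Matrix.transpose_apply]
    linarith [hMdiag j]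
  have hi0 : (M + Mᵀ) i i * (z i)^2 = 0 :=
    (Finset.sum_eq_zero_iff_of_nonneg hterm).mp hsum i (Finset.mem_univ i)
  have hMii : (M + Mᵀ) i i = M i i + M i i := by
    simp [Matrix.add_apply, Matrix.transpose_apply]
  rw [hMii] at hi0
  have hz2 : (z i)^2 = 0 := by
    rcases mul_eq_zero.mp hi0 with h | h
    · linarith
    · exact h
  have : z i = 0 := by
    have := sq_eq_zero_iff.mp hz2
    exact this
  have : x i - y i = 0 := this
  linarith
end

section
/- Suppose two solutions x, y of LCP(M,b) with M positive semi-definite satisfy (M+Mᵀ)(x−y) = 0 and bᵀ(x−y) = 0. Then every convex combination z = tx + (1−t)y, t ∈ [0,1], also solves LCP(M,b). -/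
open Matrix

/-- If two solutions `x, y` of `LCP(M,b)` (with `M` PSD) satisfy
`(M+Mᵀ)(x−y) = 0` and `bᵀ(x−y) = 0`, then every convex combination `tx + (1−t)y`
also solves `LCP(M,b)`. -/
theorem lcp_convex_combination_solution {p : ℕ}
    (M : Matrix (Fin p) (Fin p) ℝ) (b : Fin p → ℝ)
    (hpsd : ∀ z : Fin p → ℝ, 0 ≤ z ⬝ᵥ M.mulVec z)
    (x y : Fin p → ℝ)
    (hx : 0 ≤ x ∧ 0 ≤ M.mulVec x + b ∧ x ⬝ᵥ (M.mulVec x + b) = 0)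
    (hy : 0 ≤ y ∧ 0 ≤ M.mulVec y + b ∧ y ⬝ᵥ (M.mulVec y + b) = 0)
    (hMxy : (M + Mᵀ).mulVec (x - y) = 0) (hbxy : b ⬝ᵥ (x - y) = 0)
    (t : ℝ) (ht₀ : 0 ≤ t) (ht₁ : t ≤ 1) :
    0 ≤ t • x + (1 - t) • y ∧
    0 ≤ M.mulVec (t • x + (1 - t) • y) + b ∧
    (t • x + (1 - t) • y) ⬝ᵥ (M.mulVec (t • x + (1 - t) • y) + b) = 0 := by
  have ht₁' : (0:ℝ) ≤ 1 - t := by linarith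
  refine ⟨add_nonneg (smul_nonneg ht₀ hx.1) (smul_nonneg ht₁' hy.1), ?_, ?_⟩
  · have heq : M.mulVec (t • x + (1 - t) • y) + b
        = t • (M.mulVec x + b) + (1 - t) • (M.mulVec y + b) := by
      funext i
      simp [Matrix.mulVec_add, Matrix.mulVec_smul, Pi.add_apply, Pi.smul_apply,
        smul_eq_mul]
      ring
    rw [heq]
    exact add_nonneg (smul_nonneg ht₀ hx.2.1) (smul_nonneg ht₁' hy.2.1)
  · -- key: (x-y) ⬝ M (x-y) = 0
    have h1 : (x - y) ⬝ᵥ (M + Mᵀ).mulVec (x - y) = 0 := by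
      rw [hMxy]; simp
    have h2 : (x - y) ⬝ᵥ Mᵀ.mulVec (x - y) = (x - y) ⬝ᵥ M.mulVec (x - y) := by
      rw [Matrix.mulVec_transpose, Matrix.dotProduct_mulVec, dotProduct_comm]
    have h3 : (x - y) ⬝ᵥ M.mulVec (x - y) = 0 := by
      rw [Matrix.add_mulVec, dotProduct_add, h2] at h1
      linarith
    have hxx := hx.2.2
    have hyy := hy.2.2
    simp only [Matrix.mulVec_add, Matrix.mulVec_smul, Matrix.mulVec_sub,
      dotProduct_add, dotProduct_sub, dotProduct_smul, add_dotProduct,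
      sub_dotProduct, smul_dotProduct, smul_eq_mul] at h3 hxx hyy hbxy ⊢
    have hbx : x ⬝ᵥ b = b ⬝ᵥ x := dotProduct_comm _ _
    have hby : y ⬝ᵥ b = b ⬝ᵥ y := dotProduct_comm _ _
    linear_combination t * hxx + (1 - t) * hyy - t * (1 - t) * h3
end
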